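/- For any measurable m : Ω → [0,1] and v ∈ [0,1], the maximizers over segmentations of volume v of Accuracy A_m and of Dice D_m coincide, and both equal the class S_{m,v}. -/

import Mathlib

/-!
At fixed volume `v`, Accuracy is `∫ (1 - m) + 2 ∫ s m - v` and Dice is `2 ∫ s m / (v + ‖m‖₁)`,
so both are maximised exactly where `∫ s m` is. With `τ = 1 - F_m⁻¹(v)` the quantile bounds
`λ(m > τ) ≤ v ≤ λ(m ≥ τ)` produce an element `s₀` of `S_{m,v}`: fill `{m > τ}` and a slab of
`{m = τ}`. For any `s` of volume `v`, `(s₀ - s)(m - τ) ≥ 0` a.e. and its integral is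
`∫ s₀ m - ∫ s m`; hence `s₀` is a maximiser, and `s` is one iff this integrand vanishes a.e.,
which says exactly that `s ∈ S_{m,v}`.
-/

open MeasureTheory Set

noncomputable section

/-- Normalized Lebesgue measure on the unit cube `[0,1]^n`. -/
def cubeMeasure (n : ℕ) : Measure (Fin n → ℝ) :=
  volume.restrict (Set.univ.pi fun _ => Set.Icc (0:ℝ) 1)

/-- A segmentation: a measurable `{0,1}`-valued function on the cube. -/
def IsSeg {n : ℕ} (s : (Fin n → ℝ) → ℝ) : Prop :=
  Measurable s ∧ ∀ ω, s ω = 0 ∨ s ω = 1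

/-- A marginal function: a measurable `[0,1]`-valued function on the cube. -/
def IsMarg {n : ℕ} (m : (Fin n → ℝ) → ℝ) : Prop :=
  Measurable m ∧ ∀ ω, m ω ∈ Set.Icc (0:ℝ) 1

/-- The volume `‖f‖₁ = ∫ f dλ` (for nonnegative `f`). -/
def vol {n : ℕ} (f : (Fin n → ℝ) → ℝ) : ℝ := ∫ ω, f ω ∂(cubeMeasure n)

/-- `F_m(t) = λ({ω : 1 - m(ω) ≤ t})`. -/
def Fcdf {n : ℕ} (m : (Fin n → ℝ) → ℝ) (t : ℝ) : ℝ :=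
  ((cubeMeasure n) {ω | 1 - m ω ≤ t}).toReal

/-- The left limit `F_m(t-) = λ({ω : 1 - m(ω) < t})`. -/
def FcdfMinus {n : ℕ} (m : (Fin n → ℝ) → ℝ) (t : ℝ) : ℝ :=
  ((cubeMeasure n) {ω | 1 - m ω < t}).toReal

/-- The generalized inverse (quantile function) `F_m⁻¹(v) = inf{t ∈ [0,1] : F_m(t) ≥ v}`. -/
def Finv {n : ℕ} (m : (Fin n → ℝ) → ℝ) (v : ℝ) : ℝ :=
  sInf {t | t ∈ Set.Icc (0:ℝ) 1 ∧ v ≤ Fcdf m t}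

/-- Accuracy. -/
def Accu {n : ℕ} (m s : (Fin n → ℝ) → ℝ) : ℝ :=
  ∫ ω, (s ω * m ω + (1 - s ω) * (1 - m ω)) ∂(cubeMeasure n)

/-- Dice. -/
def Dice {n : ℕ} (m s : (Fin n → ℝ) → ℝ) : ℝ :=
  2 * (∫ ω, s ω * m ω ∂(cubeMeasure n)) / (vol s + vol m)

/-- The class `S_{m,v}`. -/
def Smv {n : ℕ} (m : (Fin n → ℝ) → ℝ) (v : ℝ) (s : (Fin n → ℝ) → ℝ) : Prop :=
  IsSeg s ∧ vol s = v ∧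
    (∫ ω in {ω | m ω < 1 - Finv m v}, s ω ∂(cubeMeasure n)) = 0 ∧
    (∫ ω in {ω | m ω > 1 - Finv m v}, (1 - s ω) ∂(cubeMeasure n)) = 0

open Filter
open scoped ENNReal

lemma threshold_gap_nonneg {x τ a b : ℝ} (ha : (x < τ → a = 0) ∧ (τ < x → a = 1))
    (hb : b ∈ Icc (0 : ℝ) 1) : 0 ≤ (a - b) * (x - τ) := by
  rcases lt_trichotomy x τ with hx | rfl | hx
  · rw [ha.1 hx]; exact mul_nonneg_of_nonpos_of_nonpos (by linarith [hb.1]) (by linarith)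
  · simp
  · rw [ha.2 hx]; exact mul_nonneg (by linarith [hb.2]) (by linarith)

lemma threshold_of_gap_eq_zero {x τ a b : ℝ} (ha : (x < τ → a = 0) ∧ (τ < x → a = 1))
    (h : (a - b) * (x - τ) = 0) : (x < τ → b = 0) ∧ (τ < x → b = 1) := by
  refine ⟨fun hx => ?_, fun hx => ?_⟩
  · rw [ha.1 hx] at h; rcases mul_eq_zero.1 h with h | h <;> linarith
  · rw [ha.2 hx] at h; rcases mul_eq_zero.1 h with h | h <;> linarith

section Bathtub

variable {α : Type*} [MeasurableSpace α] {μ : Measure α} {m s s₀ : α → ℝ} {τ : ℝ}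

lemma integrable_of_mem_Icc [IsFiniteMeasure μ] {f : α → ℝ} (hf : Measurable f)
    (h : ∀ x, f x ∈ Icc (0 : ℝ) 1) : Integrable f μ :=
  .of_bound hf.aestronglyMeasurable 1 <| ae_of_all _ fun x => by
    rw [Real.norm_eq_abs, abs_le]; constructor <;> linarith [(h x).1, (h x).2]

lemma setIntegral_eq_zero_iff_ae_imp {f : α → ℝ} {S : Set α} (hS : MeasurableSet S)
    (hf0 : ∀ x, 0 ≤ f x) (hf : Integrable f μ) :
    ∫ x in S, f x ∂μ = 0 ↔ ∀ᵐ x ∂μ, x ∈ S → f x = 0 := by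
  rw [setIntegral_eq_zero_iff_of_nonneg_ae (ae_of_all _ hf0) hf.integrableOn, EventuallyEq,
    ae_restrict_iff' hS]
  rfl

lemma integrable_mul_of_mem_Icc [IsFiniteMeasure μ] (hs : Measurable s)
    (hs01 : ∀ x, s x ∈ Icc (0 : ℝ) 1) (hm : Measurable m) (hm01 : ∀ x, m x ∈ Icc (0 : ℝ) 1) :
    Integrable (fun x => s x * m x) μ :=
  integrable_of_mem_Icc (hs.mul hm) fun x =>
    ⟨mul_nonneg (hs01 x).1 (hm01 x).1, mul_le_one₀ (hs01 x).2 (hm01 x).1 (hm01 x).2⟩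

lemma integrable_threshold_gap (hs : Integrable s μ) (hs₀ : Integrable s₀ μ)
    (hsm : Integrable (fun x => s x * m x) μ) (hs₀m : Integrable (fun x => s₀ x * m x) μ) :
    Integrable (fun x => (s₀ x - s x) * (m x - τ)) μ :=
  ((hs₀m.sub hsm).sub ((hs₀.sub hs).const_mul τ)).congr
    (ae_of_all _ fun x => by simp only [Pi.sub_apply]; ring)

lemma integral_threshold_gap (hs : Integrable s μ) (hs₀ : Integrable s₀ μ)
    (hsm : Integrable (fun x => s x * m x) μ) (hs₀m : Integrable (fun x => s₀ x * m x) μ) :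
    ∫ x, (s₀ x - s x) * (m x - τ) ∂μ =
      (∫ x, s₀ x * m x ∂μ - ∫ x, s x * m x ∂μ) - τ * (∫ x, s₀ x ∂μ - ∫ x, s x ∂μ) := by
  calc ∫ x, (s₀ x - s x) * (m x - τ) ∂μ
      = ∫ x, ((s₀ x * m x - s x * m x) - τ * (s₀ x - s x)) ∂μ := by congr 1 with x; ring
    _ = _ := by
      have hdiff : Integrable (fun x => s₀ x * m x - s x * m x) μ := hs₀m.sub hsm
      have hτdiff : Integrable (fun x => τ * (s₀ x - s x)) μ := (hs₀.sub hs).const_mul τ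
      rw [integral_sub hdiff hτdiff, integral_sub hs₀m hsm, integral_const_mul,
        integral_sub hs₀ hs]

lemma integral_threshold_gap_of_mem_Icc [IsFiniteMeasure μ] (hm : Measurable m)
    (hm01 : ∀ x, m x ∈ Icc (0 : ℝ) 1) (hs : Measurable s) (hs01 : ∀ x, s x ∈ Icc (0 : ℝ) 1)
    (hs₀ : Measurable s₀) (hs₀01 : ∀ x, s₀ x ∈ Icc (0 : ℝ) 1) :
    ∫ x, (s₀ x - s x) * (m x - τ) ∂μ =
      (∫ x, s₀ x * m x ∂μ - ∫ x, s x * m x ∂μ) - τ * (∫ x, s₀ x ∂μ - ∫ x, s x ∂μ) :=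
  integral_threshold_gap (integrable_of_mem_Icc hs hs01) (integrable_of_mem_Icc hs₀ hs₀01)
    (integrable_mul_of_mem_Icc hs hs01 hm hm01) (integrable_mul_of_mem_Icc hs₀ hs₀01 hm hm01)

theorem integral_mul_le_of_threshold [IsFiniteMeasure μ] (hm : Measurable m)
    (hm01 : ∀ x, m x ∈ Icc (0 : ℝ) 1) (hs : Measurable s) (hs01 : ∀ x, s x ∈ Icc (0 : ℝ) 1)
    (hs₀ : Measurable s₀) (hs₀01 : ∀ x, s₀ x ∈ Icc (0 : ℝ) 1)
    (hτ : ∀ᵐ x ∂μ, (m x < τ → s₀ x = 0) ∧ (τ < m x → s₀ x = 1))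
    (hvol : ∫ x, s x ∂μ = ∫ x, s₀ x ∂μ) :
    ∫ x, s x * m x ∂μ ≤ ∫ x, s₀ x * m x ∂μ := by
  have hgap : 0 ≤ ∫ x, (s₀ x - s x) * (m x - τ) ∂μ :=
    integral_nonneg_of_ae <| hτ.mono fun x hx => threshold_gap_nonneg hx (hs01 x)
  rw [integral_threshold_gap_of_mem_Icc hm hm01 hs hs01 hs₀ hs₀01, hvol] at hgap
  linarith

theorem threshold_of_integral_mul_eq [IsFiniteMeasure μ] (hm : Measurable m)
    (hm01 : ∀ x, m x ∈ Icc (0 : ℝ) 1) (hs : Measurable s) (hs01 : ∀ x, s x ∈ Icc (0 : ℝ) 1)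
    (hs₀ : Measurable s₀) (hs₀01 : ∀ x, s₀ x ∈ Icc (0 : ℝ) 1)
    (hτ : ∀ᵐ x ∂μ, (m x < τ → s₀ x = 0) ∧ (τ < m x → s₀ x = 1))
    (hvol : ∫ x, s x ∂μ = ∫ x, s₀ x ∂μ) (heq : ∫ x, s x * m x ∂μ = ∫ x, s₀ x * m x ∂μ) :
    ∀ᵐ x ∂μ, (m x < τ → s x = 0) ∧ (τ < m x → s x = 1) := by
  have hgap_nonneg : 0 ≤ᵐ[μ] fun x => (s₀ x - s x) * (m x - τ) :=
    hτ.mono fun x hx => threshold_gap_nonneg hx (hs01 x)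
  have hgap_int : Integrable (fun x => (s₀ x - s x) * (m x - τ)) μ :=
    integrable_threshold_gap (integrable_of_mem_Icc hs hs01) (integrable_of_mem_Icc hs₀ hs₀01)
      (integrable_mul_of_mem_Icc hs hs01 hm hm01) (integrable_mul_of_mem_Icc hs₀ hs₀01 hm hm01)
  have hgap : ∫ x, (s₀ x - s x) * (m x - τ) ∂μ = 0 := by
    rw [integral_threshold_gap_of_mem_Icc hm hm01 hs hs01 hs₀ hs₀01, hvol, heq]; ring
  filter_upwards [(integral_eq_zero_iff_of_nonneg_ae hgap_nonneg hgap_int).1 hgap, hτ]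
    with x hx hx₀
  exact threshold_of_gap_eq_zero hx₀ hx

end Bathtub

section Continuity

variable {α : Type*} [MeasurableSpace α] {μ : Measure α} {X : α → ℝ} {q : ℝ} {c : ℝ≥0∞}

lemma le_measure_le_of_forall_lt [IsFiniteMeasure μ] (hX : Measurable X)
    (h : ∀ t, q < t → c ≤ μ {x | X x ≤ t}) : c ≤ μ {x | X x ≤ q} := by
  have hset : {x | X x ≤ q} = ⋂ k : ℕ, {x | X x ≤ q + 1 / (k + 1)} := by
    ext x
    simp only [mem_ofPred_eq, mem_iInter]
    refine ⟨fun hx k => hx.trans (le_add_of_nonneg_right Nat.one_div_pos_of_nat.le), fun hx => ?_⟩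
    by_contra! hqx
    obtain ⟨k, hk⟩ := exists_nat_one_div_lt (sub_pos.2 hqx)
    linarith [hx k]
  have hanti : Antitone fun k : ℕ => {x | X x ≤ q + 1 / (k + 1)} := fun k l hkl x hx =>
    hx.trans <| add_le_add_right (Nat.one_div_le_one_div hkl) q
  rw [hset, hanti.measure_iInter (fun k => (measurableSet_le hX measurable_const).nullMeasurableSet)
    ⟨0, measure_ne_top _ _⟩]
  exact le_iInf fun k => h _ (lt_add_of_pos_right _ Nat.one_div_pos_of_nat)

lemma measure_lt_le_of_forall_lt (h : ∀ t < q, μ {x | X x ≤ t} ≤ c) : μ {x | X x < q} ≤ c := by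
  have hset : {x | X x < q} = ⋃ k : ℕ, {x | X x ≤ q - 1 / (k + 1)} := by
    ext x
    simp only [mem_ofPred_eq, mem_iUnion]
    refine ⟨fun hx => ?_, fun ⟨k, hk⟩ => hk.trans_lt (sub_lt_self _ Nat.one_div_pos_of_nat)⟩
    obtain ⟨k, hk⟩ := exists_nat_one_div_lt (sub_pos.2 hx)
    exact ⟨k, by linarith⟩
  have hmono : Monotone fun k : ℕ => {x | X x ≤ q - 1 / (k + 1)} := fun k l hkl x hx =>
    hx.trans <| sub_le_sub_left (Nat.one_div_le_one_div hkl) q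
  rw [hset, hmono.measure_iUnion]
  exact iSup_le fun k => h _ (sub_lt_self _ Nat.one_div_pos_of_nat)

end Continuity

section Slab

variable {α : Type*} [MeasurableSpace α] {μ : Measure α}

/-- `t ↦ μ (A ∩ {g ≤ t})` is `1`-Lipschitz, so the intermediate value theorem finds the cut. -/
theorem exists_subset_measure_eq_of_measurePreserving {g : α → ℝ}
    (hg : MeasurePreserving g μ (volume.restrict (Icc 0 1))) {A : Set α} (hA : MeasurableSet A)
    {r : ℝ≥0∞} (hr : r ≤ μ A) : ∃ E ⊆ A, MeasurableSet E ∧ μ E = r := by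
  have : IsFiniteMeasure μ := ⟨by
    rw [← preimage_univ (f := g), hg.measure_preimage MeasurableSet.univ.nullMeasurableSet]
    simp⟩
  have hslab : ∀ a b, μ (g ⁻¹' Ioc a b) ≤ ENNReal.ofReal (b - a) := fun a b => by
    rw [hg.measure_preimage measurableSet_Ioc.nullMeasurableSet, ← Real.volume_Ioc]
    exact Measure.restrict_le_self _
  have hnull : ∀ S, MeasurableSet S → Disjoint S (Icc 0 1) → μ (g ⁻¹' S) = 0 :=
    fun S hS hdisj => by
      rw [hg.measure_preimage hS.nullMeasurableSet, Measure.restrict_apply hS, hdisj.inter_eq,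
        measure_empty]
  let F : ℝ → Set α := fun t => A ∩ g ⁻¹' Iic t
  let f : ℝ → ℝ := fun t => (μ (F t)).toReal
  have hf_mono : Monotone f := fun t t' h =>
    ENNReal.toReal_mono (measure_ne_top _ _)
      (measure_mono (inter_subset_inter_right _ (preimage_mono (Iic_subset_Iic.2 h))))
  have hf_incr : ∀ t t', t ≤ t' → f t' ≤ f t + (t' - t) := fun t t' htt' => by
    have hcover : F t' ⊆ F t ∪ g ⁻¹' Ioc t t' := fun x ⟨hxA, hxt'⟩ => by
      by_cases hxt : g x ≤ t
      · exact Or.inl ⟨hxA, hxt⟩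
      · exact Or.inr ⟨not_le.1 hxt, hxt'⟩
    have hle : μ (F t') ≤ μ (F t) + ENNReal.ofReal (t' - t) :=
      (measure_mono hcover).trans ((measure_union_le _ _).trans (add_le_add_right (hslab t t') _))
    have := ENNReal.toReal_mono (by finiteness) hle
    rwa [ENNReal.toReal_add (measure_ne_top _ _) ENNReal.ofReal_ne_top,
      ENNReal.toReal_ofReal (sub_nonneg.2 htt')] at this
  have hf_cont : Continuous f := by
    refine (LipschitzWith.of_le_add fun x y => ?_).continuous
    rcases le_total x y with hxy | hyx
    · exact (hf_mono hxy).trans (le_add_of_nonneg_right dist_nonneg)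
    · exact (hf_incr y x hyx).trans (add_le_add_right (Real.dist_eq x y ▸ le_abs_self _) _)
  have hf_bot : f (-1) = 0 := by
    have : μ (F (-1)) = 0 := measure_mono_null inter_subset_right
      (hnull _ measurableSet_Iic (disjoint_left.2 fun x (hx : x ≤ -1) hx' => by linarith [hx'.1]))
    simp [f, this]
  have hf_top : f 1 = (μ A).toReal := by
    have : μ (g ⁻¹' Iic 1)ᶜ = 0 := by
      rw [← preimage_compl, compl_Iic]
      exact hnull _ measurableSet_Ioi
        (disjoint_left.2 fun x (hx : 1 < x) hx' => by linarith [hx'.2])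
    simp only [f, F, measure_inter_conull this]
  have hr_ne_top : r ≠ ⊤ := ne_top_of_le_ne_top (measure_ne_top _ _) hr
  obtain ⟨t, -, ht⟩ : r.toReal ∈ f '' Icc (-1) 1 := by
    refine intermediate_value_Icc (by norm_num) hf_cont.continuousOn ?_
    rw [hf_bot, hf_top]
    exact ⟨ENNReal.toReal_nonneg, ENNReal.toReal_mono (measure_ne_top _ _) hr⟩
  exact ⟨F t, inter_subset_left, hA.inter (hg.measurable measurableSet_Iic),
    (ENNReal.toReal_eq_toReal_iff' (measure_ne_top _ _) hr_ne_top).1 ht⟩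

end Slab

instance isProbabilityMeasure_volume_restrict_Icc_zero_one :
    IsProbabilityMeasure (volume.restrict (Icc (0 : ℝ) 1)) :=
  ⟨by simp⟩

section Cube

variable {n : ℕ} {m s s₀ : (Fin n → ℝ) → ℝ} {v : ℝ}

lemma cubeMeasure_eq_pi (n : ℕ) :
    cubeMeasure n = Measure.pi fun _ => volume.restrict (Icc (0 : ℝ) 1) := by
  rw [cubeMeasure, volume_pi, Measure.restrict_pi_pi]

instance isProbabilityMeasure_cubeMeasure (n : ℕ) : IsProbabilityMeasure (cubeMeasure n) := by
  rw [cubeMeasure_eq_pi]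
  infer_instance

lemma measurePreserving_eval_cubeMeasure (i : Fin n) :
    MeasurePreserving (fun ω => ω i) (cubeMeasure n) (volume.restrict (Icc 0 1)) := by
  rw [cubeMeasure_eq_pi]
  exact measurePreserving_eval _ i

lemma IsSeg.mem_Icc (hs : IsSeg s) (ω : Fin n → ℝ) : s ω ∈ Icc (0 : ℝ) 1 := by
  rcases hs.2 ω with h | h <;> simp [h]

lemma IsSeg.integrable (hs : IsSeg s) : Integrable s (cubeMeasure n) :=
  integrable_of_mem_Icc hs.1 hs.mem_Icc

lemma isSeg_indicator_one {B : Set (Fin n → ℝ)} (hB : MeasurableSet B) : IsSeg (B.indicator 1) :=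
  ⟨measurable_one.indicator hB, fun ω => by by_cases hω : ω ∈ B <;> simp [hω]⟩

lemma vol_indicator_one {B : Set (Fin n → ℝ)} (hB : MeasurableSet B) :
    vol (B.indicator 1) = (cubeMeasure n).real B :=
  integral_indicator_one hB

lemma smv_iff (hm : IsMarg m) :
    Smv m v s ↔ IsSeg s ∧ vol s = v ∧ ∀ᵐ ω ∂cubeMeasure n,
      (m ω < 1 - Finv m v → s ω = 0) ∧ (1 - Finv m v < m ω → s ω = 1) := by
  refine and_congr_right fun hs => and_congr_right fun _ => ?_
  rw [setIntegral_eq_zero_iff_ae_imp (measurableSet_lt hm.1 measurable_const)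
      (fun ω => (hs.mem_Icc ω).1) hs.integrable,
    setIntegral_eq_zero_iff_ae_imp (measurableSet_lt measurable_const hm.1)
      (fun ω => sub_nonneg.2 (hs.mem_Icc ω).2) ((integrable_const 1).sub hs.integrable),
    ← eventually_and]
  simp only [mem_ofPred_eq, sub_eq_zero, eq_comm (a := (1 : ℝ))]

theorem Smv.integral_mul_le (hm : IsMarg m) (hs₀ : Smv m v s₀) (hs : IsSeg s)
    (hvs : vol s = v) :
    ∫ ω, s ω * m ω ∂cubeMeasure n ≤ ∫ ω, s₀ ω * m ω ∂cubeMeasure n := by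
  obtain ⟨hs₀, hvs₀, hτ⟩ := (smv_iff hm).1 hs₀
  exact integral_mul_le_of_threshold hm.1 hm.2 hs.1 hs.mem_Icc hs₀.1 hs₀.mem_Icc hτ
    (hvs.trans hvs₀.symm)

theorem Smv.smv_of_integral_mul_eq (hm : IsMarg m) (hs₀ : Smv m v s₀) (hs : IsSeg s)
    (hvs : vol s = v) (heq : ∫ ω, s ω * m ω ∂cubeMeasure n = ∫ ω, s₀ ω * m ω ∂cubeMeasure n) :
    Smv m v s := by
  obtain ⟨hs₀, hvs₀, hτ⟩ := (smv_iff hm).1 hs₀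
  exact (smv_iff hm).2 ⟨hs, hvs, threshold_of_integral_mul_eq hm.1 hm.2 hs.1 hs.mem_Icc hs₀.1
    hs₀.mem_Icc hτ (hvs.trans hvs₀.symm) heq⟩

end Cube

section Scores

variable {n : ℕ} {m s s' : (Fin n → ℝ) → ℝ}

lemma accu_eq (hm : IsMarg m) (hs : IsSeg s) :
    Accu m s = ∫ ω, (1 - m ω) ∂cubeMeasure n + 2 * ∫ ω, s ω * m ω ∂cubeMeasure n - vol s := by
  have h1m : Integrable (fun ω => 1 - m ω) (cubeMeasure n) :=
    (integrable_const 1).sub (integrable_of_mem_Icc hm.1 hm.2)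
  have hsm : Integrable (fun ω => 2 * (s ω * m ω)) (cubeMeasure n) :=
    (integrable_mul_of_mem_Icc hs.1 hs.mem_Icc hm.1 hm.2).const_mul 2
  calc Accu m s = ∫ ω, ((1 - m ω) + 2 * (s ω * m ω)) - s ω ∂cubeMeasure n := by
        unfold Accu; congr 1 with ω; ring
    _ = _ := by
        have hsum : Integrable (fun ω => (1 - m ω) + 2 * (s ω * m ω)) (cubeMeasure n) :=
          h1m.add hsm
        rw [integral_sub hsum hs.integrable, integral_add h1m hsm, integral_const_mul, vol]

lemma accu_le_accu_iff (hm : IsMarg m) (hs : IsSeg s) (hs' : IsSeg s') (hvol : vol s = vol s') :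
    Accu m s ≤ Accu m s' ↔
      ∫ ω, s ω * m ω ∂cubeMeasure n ≤ ∫ ω, s' ω * m ω ∂cubeMeasure n := by
  rw [accu_eq hm hs, accu_eq hm hs', hvol]
  constructor <;> intro h <;> linarith

lemma dice_le_dice_iff (hpos : 0 < vol s + vol m) (hvol : vol s = vol s') :
    Dice m s ≤ Dice m s' ↔
      ∫ ω, s ω * m ω ∂cubeMeasure n ≤ ∫ ω, s' ω * m ω ∂cubeMeasure n := by
  rw [Dice, Dice, ← hvol, div_le_div_iff_of_pos_right hpos, mul_le_mul_iff_right₀ two_pos]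

end Scores

section Quantile

variable {n : ℕ} {m : (Fin n → ℝ) → ℝ} {v t : ℝ}

lemma Fcdf_mono (m : (Fin n → ℝ) → ℝ) : Monotone (Fcdf m) := fun _ _ h =>
  ENNReal.toReal_mono (measure_ne_top _ _) (measure_mono fun _ hω => le_trans hω h)

lemma Fcdf_one (hm : IsMarg m) : Fcdf m 1 = 1 := by
  have : {ω | 1 - m ω ≤ (1 : ℝ)} = univ := eq_univ_of_forall fun ω => by
    simpa using (hm.2 ω).1
  rw [Fcdf, this, measure_univ, ENNReal.toReal_one]

lemma one_mem_Finv_set (hm : IsMarg m) (hv : v ∈ Icc (0 : ℝ) 1) :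
    (1 : ℝ) ∈ {t | t ∈ Icc (0 : ℝ) 1 ∧ v ≤ Fcdf m t} :=
  ⟨right_mem_Icc.2 zero_le_one, (Fcdf_one hm).symm ▸ hv.2⟩

lemma Finv_mem_Icc (hm : IsMarg m) (hv : v ∈ Icc (0 : ℝ) 1) : Finv m v ∈ Icc (0 : ℝ) 1 :=
  ⟨le_csInf ⟨1, one_mem_Finv_set hm hv⟩ fun _ ht => ht.1.1,
    csInf_le ⟨0, fun _ ht => ht.1.1⟩ (one_mem_Finv_set hm hv)⟩

lemma le_Fcdf_of_Finv_lt (hm : IsMarg m) (hv : v ∈ Icc (0 : ℝ) 1) (ht : Finv m v < t) :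
    v ≤ Fcdf m t := by
  obtain ⟨t', ht', ht't⟩ := exists_lt_of_csInf_lt ⟨1, one_mem_Finv_set hm hv⟩ ht
  exact ht'.2.trans (Fcdf_mono m ht't.le)

lemma Fcdf_le_of_lt_Finv (hm : IsMarg m) (hv : v ∈ Icc (0 : ℝ) 1) (ht : t < Finv m v) :
    Fcdf m t ≤ v := by
  rcases lt_or_ge t 0 with ht0 | ht0
  · have : {ω | 1 - m ω ≤ t} = ∅ := eq_empty_of_forall_notMem fun ω hω => by
      linarith [(hm.2 ω).2, show 1 - m ω ≤ t from hω]
    rw [Fcdf, this, measure_empty, ENNReal.toReal_zero]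
    exact hv.1
  · by_contra! hvt
    have ht_mem : t ∈ {t | t ∈ Icc (0 : ℝ) 1 ∧ v ≤ Fcdf m t} :=
      ⟨⟨ht0, ht.le.trans (Finv_mem_Icc hm hv).2⟩, hvt.le⟩
    exact (csInf_le ⟨0, fun _ ht => ht.1.1⟩ ht_mem).not_gt ht

lemma le_measure_threshold_le (hm : IsMarg m) (hv : v ∈ Icc (0 : ℝ) 1) :
    ENNReal.ofReal v ≤ cubeMeasure n {ω | 1 - Finv m v ≤ m ω} := by
  simp_rw [sub_le_comm (a := (1 : ℝ))]
  refine le_measure_le_of_forall_lt (measurable_const.sub hm.1) fun t ht => ?_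
  exact (ENNReal.ofReal_le_iff_le_toReal (measure_ne_top _ _)).2 (le_Fcdf_of_Finv_lt hm hv ht)

lemma measure_threshold_lt_le (hm : IsMarg m) (hv : v ∈ Icc (0 : ℝ) 1) :
    cubeMeasure n {ω | 1 - Finv m v < m ω} ≤ ENNReal.ofReal v := by
  simp_rw [sub_lt_comm (a := (1 : ℝ))]
  refine measure_lt_le_of_forall_lt fun t ht => ?_
  exact (ENNReal.le_ofReal_iff_toReal_le (measure_ne_top _ _) hv.1).2 (Fcdf_le_of_lt_Finv hm hv ht)

end Quantile

section Existence

variable {n : ℕ} {m : (Fin n → ℝ) → ℝ} {v : ℝ}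

/-- The zero-dimensional cube is a single atom, so no slab of `{m = τ}` can be cut there; but
a segmentation is then its own volume, and the quantile bounds force the threshold conditions. -/
lemma smv_of_dim_zero {m s : (Fin 0 → ℝ) → ℝ} (hm : IsMarg m) (hv : v ∈ Icc (0 : ℝ) 1)
    (hs : IsSeg s) (hvs : vol s = v) : Smv m v s := by
  refine (smv_iff hm).2 ⟨hs, hvs, ae_of_all _ fun ω => ?_⟩
  have hsω : s ω = v := by
    rw [← hvs, vol, integral_unique, probReal_univ, one_smul, Unique.eq_default ω]
  refine ⟨fun hlt => ?_, fun hgt => ?_⟩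
  · have hempty : {ω' | 1 - Finv m v ≤ m ω'} = ∅ := eq_empty_of_forall_notMem fun ω' h =>
      (Subsingleton.elim ω' ω ▸ h).not_gt hlt
    have h := le_measure_threshold_le hm hv
    rw [hempty, measure_empty, nonpos_iff_eq_zero, ENNReal.ofReal_eq_zero] at h
    linarith [hv.1]
  · have huniv : {ω' | 1 - Finv m v < m ω'} = univ := eq_univ_of_forall fun ω' =>
      Subsingleton.elim ω ω' ▸ hgt
    have h := measure_threshold_lt_le hm hv
    rw [huniv, measure_univ, ENNReal.one_le_ofReal] at h
    linarith [hv.2]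

lemma exists_smv_of_pos (hn : 0 < n) (hm : IsMarg m) (hv : v ∈ Icc (0 : ℝ) 1) :
    ∃ s₀, Smv m v s₀ := by
  set τ := 1 - Finv m v
  set μ := cubeMeasure n
  let G := {ω | τ < m ω}
  let A := {ω | m ω = τ}
  have hG : MeasurableSet G := measurableSet_lt measurable_const hm.1
  have hA : MeasurableSet A := measurableSet_eq_fun hm.1 measurable_const
  have hμG : μ G ≤ ENNReal.ofReal v := measure_threshold_lt_le hm hv
  have hμGA : ENNReal.ofReal v ≤ μ G + μ A := by
    refine (le_measure_threshold_le hm hv).trans ((measure_mono fun ω hω => ?_).trans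
      (measure_union_le G A))
    exact (eq_or_lt_of_le hω).elim (fun h => Or.inr h.symm) Or.inl
  obtain ⟨E, hEA, hE, hμE⟩ := exists_subset_measure_eq_of_measurePreserving
    (measurePreserving_eval_cubeMeasure ⟨0, hn⟩) hA (tsub_le_iff_left.2 hμGA)
  have hGE : Disjoint G E := disjoint_left.2 fun ω (hωG : τ < m ω) hωE => hωG.ne' (hEA hωE)
  have hμB : μ (G ∪ E) = ENNReal.ofReal v := by
    rw [measure_union hGE hE, hμE, add_tsub_cancel_of_le hμG]
  refine ⟨(G ∪ E).indicator 1, (smv_iff hm).2 ⟨isSeg_indicator_one (hG.union hE), ?_,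
    ae_of_all _ fun ω => ⟨fun hlt => ?_, fun hgt => ?_⟩⟩⟩
  · rw [vol_indicator_one (hG.union hE), measureReal_def, hμB, ENNReal.toReal_ofReal hv.1]
  · exact indicator_of_notMem (fun hω => hω.elim (lt_asymm hlt) fun h => hlt.ne (hEA h)) _
  · exact indicator_of_mem (show ω ∈ G ∪ E from Or.inl hgt) _

theorem exists_smv (hm : IsMarg m) (hv : v ∈ Icc (0 : ℝ) 1)
    (hex : ∃ s : (Fin n → ℝ) → ℝ, IsSeg s ∧ vol s = v) : ∃ s₀, Smv m v s₀ := by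
  rcases n.eq_zero_or_pos with rfl | hn
  · obtain ⟨s, hs, hvs⟩ := hex
    exact ⟨s, smv_of_dim_zero hm hv hs hvs⟩
  · exact exists_smv_of_pos hn hm hv

end Existence

theorem setOf_isMax_eq_smv {n : ℕ} {m : (Fin n → ℝ) → ℝ} {v : ℝ} (hm : IsMarg m)
    (hv : v ∈ Icc (0 : ℝ) 1) (J : ((Fin n → ℝ) → ℝ) → ℝ)
    (hJ : ∀ s s', IsSeg s → IsSeg s' → vol s = v → vol s' = v →
      (J s ≤ J s' ↔ ∫ ω, s ω * m ω ∂cubeMeasure n ≤ ∫ ω, s' ω * m ω ∂cubeMeasure n)) :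
    {s | IsSeg s ∧ vol s = v ∧ ∀ s', IsSeg s' → vol s' = v → J s' ≤ J s} = {s | Smv m v s} := by
  ext s
  refine ⟨fun ⟨hs, hvs, hmax⟩ => ?_, fun hsmv => ⟨hsmv.1, hsmv.2.1, fun s' hs' hvs' => ?_⟩⟩
  · obtain ⟨s₀, hs₀⟩ := exists_smv hm hv ⟨s, hs, hvs⟩
    refine hs₀.smv_of_integral_mul_eq hm hs hvs (le_antisymm (hs₀.integral_mul_le hm hs hvs) ?_)
    exact (hJ _ _ hs₀.1 hs hs₀.2.1 hvs).1 (hmax s₀ hs₀.1 hs₀.2.1)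
  · exact (hJ _ _ hs' hsmv.1 hvs' hsmv.2.1).2 (hsmv.integral_mul_le hm hs' hvs')

theorem stmt13 {n : ℕ} {m : (Fin n → ℝ) → ℝ} (hm : IsMarg m) (h0 : 0 < vol m)
    {v : ℝ} (hv : v ∈ Set.Icc (0:ℝ) 1) :
    {s | IsSeg s ∧ vol s = v ∧ ∀ s', IsSeg s' → vol s' = v → Accu m s' ≤ Accu m s} =
      {s | Smv m v s} ∧
    {s | IsSeg s ∧ vol s = v ∧ ∀ s', IsSeg s' → vol s' = v → Dice m s' ≤ Dice m s} =
      {s | Smv m v s} :=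
  ⟨setOf_isMax_eq_smv hm hv (Accu m) fun _ _ hs hs' hvs hvs' =>
      accu_le_accu_iff hm hs hs' (hvs.trans hvs'.symm),
    setOf_isMax_eq_smv hm hv (Dice m) fun _ _ _ _ hvs hvs' =>
      dice_le_dice_iff (by linarith [hv.1]) (hvs.trans hvs'.symm)⟩
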